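/- arXiv:2203.04897 — 2 statements merged into one kernel-verified Lean document; each statement's English description precedes it below -/
import Mathlib

section
/- Let α ∈ (0,1), B > 0, and let p be a probability density on (0,∞) with p(y) = y^{-1-α} for all y ≥ B. Let h > 0, L > 0, β > α, and let f : [0,∞) → ℝ be continuous with f(0) = 0, f(y) → 0 as y → ∞, and |f(y)| ≤ L·y^β for all y ∈ [0, B·h]. Then |h^{-α} ∫₀^∞ f(h·y) p(y) dy − ∫₀^∞ f(y) y^{-1-α} dy| ≤ (B^{β-α}/(β-α) + ∫₀^B y^β p(y) dy) · L · h^{β-α}. -/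
/-!
On `(B, ∞)` the density is exactly `y ^ (-1 - α)`, so after the substitution `z = h y` the tail
`h ^ (-α) ∫_B^∞ f (h y) p y dy` is exactly `∫_{hB}^∞ f z z ^ (-1 - α) dz` and the two tails cancel.
What remains are the integrals over `(0, B]` and `(0, hB]`, both controlled by the Hölder bound
`|f y| ≤ L y ^ β`: the first by `L h ^ β ∫_0^B y ^ β p y dy`, the second by
`L (hB) ^ (β - α) / (β - α)`. Since `f` is continuous with a limit at infinity it is bounded,
which makes every integral involved absolutely convergent.
-/

open MeasureTheory Set Filter Real Topology

lemma exists_norm_le_of_continuousOn_Ici_of_tendsto {E : Type*} [NormedAddCommGroup E]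
    {f : ℝ → E} {a : ℝ} {c : E} (hf : ContinuousOn f (Ici a)) (hlim : Tendsto f atTop (𝓝 c)) :
    ∃ M, ∀ y ∈ Ici a, ‖f y‖ ≤ M := by
  obtain ⟨s, hs, hs_bdd⟩ := Metric.exists_isBounded_image_of_tendsto hlim
  obtain ⟨C, hC⟩ := mem_atTop_sets.1 hs
  have hIcc_bdd : Bornology.IsBounded (f '' Icc a C) :=
    (isCompact_Icc.image_of_continuousOn (hf.mono Icc_subset_Ici_self)).isBounded
  obtain ⟨M, hM⟩ := isBounded_iff_forall_norm_le.1 (hIcc_bdd.union hs_bdd)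
  refine ⟨M, fun y hy => hM _ ?_⟩
  rcases le_total y C with hyC | hCy
  · exact Or.inl ⟨y, ⟨hy, hyC⟩, rfl⟩
  · exact Or.inr ⟨y, hC y hCy, rfl⟩

lemma IntegrableOn.continuousOn_mul_of_norm_le {f g : ℝ → ℝ} {s : Set ℝ} {M : ℝ}
    (hg : IntegrableOn g s) (hf : ContinuousOn f s) (hs : MeasurableSet s)
    (hM : ∀ y ∈ s, ‖f y‖ ≤ M) : IntegrableOn (fun y => f y * g y) s :=
  hg.bdd_mul (hf.aestronglyMeasurable hs) ((ae_restrict_iff' hs).2 (ae_of_all _ hM))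

lemma setIntegral_Ioi_eq_Ioc_add_Ioi {f : ℝ → ℝ} {a b : ℝ} (hab : a ≤ b)
    (hf : IntegrableOn f (Ioi a)) :
    ∫ y in Ioi a, f y = (∫ y in Ioc a b, f y) + ∫ y in Ioi b, f y := by
  rw [← setIntegral_union Ioc_disjoint_Ioi_same measurableSet_Ioi
    (hf.mono_set Ioc_subset_Ioi_self) (hf.mono_set (Ioi_subset_Ioi hab)),
    Ioc_union_Ioi_eq_Ioi hab]

lemma setIntegral_Ioi_comp_mul_mul_rpow (g : ℝ → ℝ) (s : ℝ) {a h : ℝ} (ha : 0 ≤ a)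
    (hh : 0 < h) :
    ∫ y in Ioi a, g (h * y) * y ^ s = h ^ (-s - 1) * ∫ z in Ioi (h * a), g z * z ^ s := by
  have hscale := integral_comp_mul_left_Ioi (fun z => g z * z ^ s) a hh
  have hpull : ∫ y in Ioi a, g (h * y) * (h * y) ^ s
      = h ^ s * ∫ y in Ioi a, g (h * y) * y ^ s := by
    rw [← integral_const_mul]
    refine setIntegral_congr_fun measurableSet_Ioi fun y hy => ?_
    rw [mul_rpow hh.le (ha.trans (le_of_lt hy))]
    ring
  rw [hpull, smul_eq_mul] at hscale
  rw [rpow_sub hh, rpow_one, div_eq_mul_inv, mul_assoc, ← hscale, ← mul_assoc, ← rpow_add hh,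
    neg_add_cancel, rpow_zero, one_mul]

section HolderNearZero

variable {f : ℝ → ℝ} {c L β s : ℝ}

lemma abs_mul_rpow_le_of_abs_le_rpow {y : ℝ} (hy : 0 < y) (hfy : |f y| ≤ L * y ^ β) :
    |f y * y ^ s| ≤ L * y ^ (β + s) := by
  rw [abs_mul, abs_of_pos (rpow_pos_of_pos hy s), rpow_add hy, ← mul_assoc]
  exact mul_le_mul_of_nonneg_right hfy (rpow_pos_of_pos hy s).le

lemma integrableOn_Ioc_rpow_of_neg_one_lt {r : ℝ} (hr : -1 < r) :
    IntegrableOn (fun y : ℝ => y ^ r) (Ioc 0 c) := by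
  rcases le_total 0 c with hc | hc
  · exact (intervalIntegrable_iff_integrableOn_Ioc_of_le hc).1
      (intervalIntegral.intervalIntegrable_rpow' hr)
  · simp [Ioc_eq_empty_of_le hc]

lemma integral_Ioc_rpow_of_neg_one_lt {r : ℝ} (hc : 0 ≤ c) (hr : -1 < r) :
    ∫ y in Ioc 0 c, y ^ r = c ^ (r + 1) / (r + 1) := by
  rw [← intervalIntegral.integral_of_le hc, integral_rpow (Or.inl hr),
    zero_rpow (by linarith), sub_zero]

lemma integrableOn_Ioc_mul_rpow_of_abs_le (hβs : -1 < β + s)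
    (hf : AEStronglyMeasurable f (volume.restrict (Ioc 0 c)))
    (hfL : ∀ y ∈ Ioc 0 c, |f y| ≤ L * y ^ β) :
    IntegrableOn (fun y => f y * y ^ s) (Ioc 0 c) := by
  refine ((integrableOn_Ioc_rpow_of_neg_one_lt hβs).const_mul L).mono'
    (hf.mul ((continuousOn_id.rpow_const fun y (hy : y ∈ Ioc 0 c) => Or.inl hy.1.ne')
      |>.aestronglyMeasurable measurableSet_Ioc)) ?_
  filter_upwards [ae_restrict_mem measurableSet_Ioc] with y hy
  exact abs_mul_rpow_le_of_abs_le_rpow hy.1 (hfL y hy)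

lemma abs_setIntegral_Ioc_mul_rpow_le (hc : 0 ≤ c) (hβs : -1 < β + s)
    (hfL : ∀ y ∈ Ioc 0 c, |f y| ≤ L * y ^ β) :
    |∫ y in Ioc 0 c, f y * y ^ s| ≤ L * c ^ (β + s + 1) / (β + s + 1) := by
  calc |∫ y in Ioc 0 c, f y * y ^ s| ≤ ∫ y in Ioc 0 c, L * y ^ (β + s) :=
        norm_integral_le_of_norm_le (f := fun y => f y * y ^ s)
          ((integrableOn_Ioc_rpow_of_neg_one_lt hβs).const_mul L)
          ((ae_restrict_iff' measurableSet_Ioc).2 (ae_of_all _ fun y hy =>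
            abs_mul_rpow_le_of_abs_le_rpow hy.1 (hfL y hy)))
    _ = L * c ^ (β + s + 1) / (β + s + 1) := by
        rw [integral_const_mul, integral_Ioc_rpow_of_neg_one_lt hc hβs, mul_div_assoc]

end HolderNearZero

lemma integrableOn_Ioi_mul_rpow_of_abs_le {f : ℝ → ℝ} {c M L β s : ℝ} (hc : 0 < c)
    (hs : s < -1) (hβs : -1 < β + s) (hf : ContinuousOn f (Ioi 0)) (hM : ∀ y ∈ Ioi 0, ‖f y‖ ≤ M)
    (hfL : ∀ y ∈ Ioc 0 c, |f y| ≤ L * y ^ β) :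
    IntegrableOn (fun y => f y * y ^ s) (Ioi 0) := by
  rw [← Ioc_union_Ioi_eq_Ioi hc.le]
  refine (integrableOn_Ioc_mul_rpow_of_abs_le hβs
    ((hf.mono Ioc_subset_Ioi_self).aestronglyMeasurable measurableSet_Ioc) hfL).union ?_
  have hrpow := integrableOn_Ioi_rpow_of_lt hs hc
  exact IntegrableOn.continuousOn_mul_of_norm_le hrpow (hf.mono (Ioi_subset_Ioi hc.le))
    measurableSet_Ioi fun y hy => hM y (hc.trans hy)

lemma abs_setIntegral_Ioc_comp_mul_mul_le {f p : ℝ → ℝ} {B h L β : ℝ} (hh : 0 < h) (hβ : 0 ≤ β)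
    (hp : IntegrableOn p (Ioc 0 B)) (hp_nonneg : ∀ y ∈ Ioc 0 B, 0 ≤ p y)
    (hfL : ∀ y ∈ Ioc 0 (h * B), |f y| ≤ L * y ^ β) :
    |∫ y in Ioc 0 B, f (h * y) * p y| ≤ L * h ^ β * ∫ y in Ioc 0 B, y ^ β * p y := by
  have hmoment : IntegrableOn (fun y => y ^ β * p y) (Ioc 0 B) :=
    IntegrableOn.continuousOn_mul_of_norm_le hp (continuousOn_id.rpow_const fun y _ => Or.inr hβ)
      measurableSet_Ioc fun y hy => by
        rw [norm_of_nonneg (rpow_nonneg hy.1.le β)]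
        exact rpow_le_rpow hy.1.le hy.2 hβ
  rw [← integral_const_mul]
  refine norm_integral_le_of_norm_le (f := fun y => f (h * y) * p y) (hmoment.const_mul _)
    ((ae_restrict_iff' measurableSet_Ioc).2 (ae_of_all _ fun y hy => ?_))
  have hhy : h * y ∈ Ioc 0 (h * B) := ⟨mul_pos hh hy.1, mul_le_mul_of_nonneg_left hy.2 hh.le⟩
  calc ‖f (h * y) * p y‖ = |f (h * y)| * p y := by
        rw [norm_mul, norm_of_nonneg (hp_nonneg y hy), Real.norm_eq_abs]
    _ ≤ L * (h * y) ^ β * p y := mul_le_mul_of_nonneg_right (hfL _ hhy) (hp_nonneg y hy)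
    _ = L * h ^ β * (y ^ β * p y) := by rw [mul_rpow hh.le hy.1.le]; ring

lemma rpow_neg_mul_integral_comp_mul_sub_integral_eq {f p : ℝ → ℝ} {α B h : ℝ} (hB : 0 ≤ B)
    (hh : 0 < h) (hp_tail : ∀ y ∈ Ioi B, p y = y ^ (-1 - α))
    (hfp : IntegrableOn (fun y => f (h * y) * p y) (Ioi 0))
    (hf : IntegrableOn (fun y => f y * y ^ (-1 - α)) (Ioi 0)) :
    h ^ (-α) * (∫ y in Ioi 0, f (h * y) * p y) - ∫ y in Ioi 0, f y * y ^ (-1 - α)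
      = h ^ (-α) * (∫ y in Ioc 0 B, f (h * y) * p y)
        - ∫ y in Ioc 0 (h * B), f y * y ^ (-1 - α) := by
  have htail : ∫ y in Ioi B, f (h * y) * p y
      = h ^ α * ∫ z in Ioi (h * B), f z * z ^ (-1 - α) := by
    rw [setIntegral_congr_fun measurableSet_Ioi fun y hy => by rw [hp_tail y hy],
      setIntegral_Ioi_comp_mul_mul_rpow f _ hB hh, show -(-1 - α) - 1 = α by ring]
  have hcancel : h ^ (-α) * h ^ α = 1 := by rw [← rpow_add hh, neg_add_cancel, rpow_zero]
  rw [setIntegral_Ioi_eq_Ioc_add_Ioi hB hfp, htail,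
    setIntegral_Ioi_eq_Ioc_add_Ioi (mul_nonneg hh.le hB) hf]
  linear_combination (∫ z in Ioi (h * B), f z * z ^ (-1 - α)) * hcancel

theorem stmt_1_general
    (α B h L β : ℝ) (hα : α ∈ Set.Ioo (0:ℝ) 1) (hB : 0 < B) (hh : 0 < h)
    (hβ : α < β)
    (p : ℝ → ℝ)
    (hp_nonneg : ∀ y ∈ Set.Ioi (0:ℝ), 0 ≤ p y)
    (hp_prob : ∫ y in Set.Ioi (0:ℝ), p y = 1)
    (hp_tail : ∀ y : ℝ, B ≤ y → p y = y ^ (-1 - α))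
    (f : ℝ → ℝ) (hf_cont : ContinuousOn f (Set.Ici 0))
    (hf_inf : Tendsto f atTop (nhds 0))
    (hf_hold : ∀ y ∈ Set.Icc (0:ℝ) (B * h), |f y| ≤ L * y ^ β) :
    |h ^ (-α) * (∫ y in Set.Ioi (0:ℝ), f (h * y) * p y)
        - ∫ y in Set.Ioi (0:ℝ), f y * y ^ (-1 - α)|
      ≤ (B ^ (β - α) / (β - α) + ∫ y in Set.Ioc (0:ℝ) B, y ^ β * p y) * L * h ^ (β - α) := by
  obtain ⟨hα0, -⟩ := hα
  have hp_int : IntegrableOn p (Ioi 0) :=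
    Integrable.of_integral_ne_zero (by rw [hp_prob]; exact one_ne_zero)
  obtain ⟨M, hM⟩ := exists_norm_le_of_continuousOn_Ici_of_tendsto hf_cont hf_inf
  have hf_near : ∀ y ∈ Ioc 0 (h * B), |f y| ≤ L * y ^ β :=
    fun y hy => hf_hold y ⟨hy.1.le, mul_comm h B ▸ hy.2⟩
  have hfp_int : IntegrableOn (fun y => f (h * y) * p y) (Ioi 0) :=
    IntegrableOn.continuousOn_mul_of_norm_le hp_int
      (hf_cont.comp (continuousOn_const.mul continuousOn_id) fun y hy => (mul_pos hh hy).le)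
      measurableSet_Ioi fun y hy => hM _ (mul_pos hh hy).le
  have hf_int : IntegrableOn (fun y => f y * y ^ (-1 - α)) (Ioi 0) :=
    integrableOn_Ioi_mul_rpow_of_abs_le (mul_pos hh hB) (by linarith) (by linarith)
      (hf_cont.mono Ioi_subset_Ici_self) (fun y hy => hM y (Ioi_subset_Ici_self hy)) hf_near
  rw [rpow_neg_mul_integral_comp_mul_sub_integral_eq hB.le hh (fun y hy => hp_tail y hy.le)
    hfp_int hf_int]
  have hnear_p := abs_setIntegral_Ioc_comp_mul_mul_le hh (by linarith)
    (hp_int.mono_set Ioc_subset_Ioi_self) (fun y hy => hp_nonneg y hy.1) hf_near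
  have hnear_levy := abs_setIntegral_Ioc_mul_rpow_le (s := -1 - α) (mul_pos hh hB).le
    (by linarith) hf_near
  rw [show β + (-1 - α) + 1 = β - α by ring, mul_rpow hh.le hB.le] at hnear_levy
  set T₁ := ∫ y in Ioc 0 B, f (h * y) * p y
  set T₂ := ∫ y in Ioc 0 (h * B), f y * y ^ (-1 - α)
  set I := ∫ y in Ioc 0 B, y ^ β * p y
  have hpow : h ^ (-α) * h ^ β = h ^ (β - α) := by rw [← rpow_add hh]; ring_nf
  calc |h ^ (-α) * T₁ - T₂| ≤ |h ^ (-α) * T₁| + |T₂| := abs_sub _ _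
    _ = h ^ (-α) * |T₁| + |T₂| := by rw [abs_mul, abs_of_pos (rpow_pos_of_pos hh _)]
    _ ≤ h ^ (-α) * (L * h ^ β * I) + L * (h ^ (β - α) * B ^ (β - α)) / (β - α) := by gcongr
    _ = (B ^ (β - α) / (β - α) + I) * L * h ^ (β - α) := by linear_combination L * I * hpow

/-- Remark after Proposition 5.1 (Hölder case): if `p` is a probability density on `(0,∞)`
with `p(y) = y^{-1-α}` for `y ≥ B`, and `f` is continuous on `[0,∞)` with `f(0)=0`, `f(∞)=0`
and `|f(y)| ≤ L y^β` on `[0,Bh]` with `β > α`, then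
`|h^{-α} ∫₀^∞ f(hy) p(y) dy − ∫₀^∞ f(y) y^{-1-α} dy|
  ≤ (B^{β-α}/(β-α) + ∫₀^B y^β p(y) dy) L h^{β-α}`. -/
theorem stmt_1
    (α B h L β : ℝ) (hα : α ∈ Set.Ioo (0:ℝ) 1) (hB : 0 < B) (hh : 0 < h) (hL : 0 < L)
    (hβ : α < β)
    (p : ℝ → ℝ) (hp_meas : Measurable p)
    (hp_nonneg : ∀ y ∈ Set.Ioi (0:ℝ), 0 ≤ p y)
    (hp_prob : ∫ y in Set.Ioi (0:ℝ), p y = 1)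
    (hp_tail : ∀ y : ℝ, B ≤ y → p y = y ^ (-1 - α))
    (f : ℝ → ℝ) (hf_cont : ContinuousOn f (Set.Ici 0))
    (hf0 : f 0 = 0)
    (hf_inf : Tendsto f atTop (nhds 0))
    (hf_hold : ∀ y ∈ Set.Icc (0:ℝ) (B * h), |f y| ≤ L * y ^ β) :
    |h ^ (-α) * (∫ y in Set.Ioi (0:ℝ), f (h * y) * p y)
        - ∫ y in Set.Ioi (0:ℝ), f y * y ^ (-1 - α)|
      ≤ (B ^ (β - α) / (β - α) + ∫ y in Set.Ioc (0:ℝ) B, y ^ β * p y) * L * h ^ (β - α) :=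
  stmt_1_general α B h L β hα hB hh hβ p hp_nonneg hp_prob hp_tail f hf_cont hf_inf hf_hold
end

section
/- Let α ∈ (0,1), B > 0, and let p be a probability density on (0,∞) with p(y) = y^{-1-α} for all y ≥ B. Let τ ∈ (0,1], x ∈ ℝ, L > 0, and let f : ℝ → ℝ be bounded and measurable with |f(x + ε·y) − f(x)| ≤ L·y for all y ∈ [0, B·τ^{1/α}] and each sign ε ∈ {+1, −1}. Then for each ε ∈ {+1, −1}: |τ^{-1} ∫₀^∞ (f(x + ε·τ^{1/α}·y) − f(x)) p(y) dy − ∫₀^∞ (f(x + ε·y) − f(x)) y^{-1-α} dy| ≤ C_B · L · τ^{(1/α) − 1}, where C_B = B^{1-α}/(1-α) + ∫₀^B y·p(y) dy. -/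
/-!
Put `h = τ^{1/α}` and `g(y) = f(x + εy) - f(x)`. The kernel `y^{-1-α}` is `α`-stable under
dilation, so `∫ g(y) y^{-1-α} dy = h^{-α} ∫ g(hy) y^{-1-α} dy = τ⁻¹ ∫ g(hy) y^{-1-α} dy`, and the
difference to be estimated is `τ⁻¹ ∫ g(hy) (p(y) - y^{-1-α}) dy`. The integrand vanishes for
`y ≥ B`, while for `y ≤ B` the Lipschitz bound gives `|g(hy)| ≤ L h y`; hence the difference is at
most `τ⁻¹ L h (∫₀^B y p(y) dy + ∫₀^B y^{-α} dy) = C_B L τ^{1/α - 1}`.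
-/

open MeasureTheory Set Filter

theorem integral_Ioi_comp_mul_left_mul_rpow (g : ℝ → ℝ) {c : ℝ} (hc : 0 < c) (s : ℝ) :
    ∫ y in Ioi 0, g (c * y) * y ^ s = c ^ (-1 - s) * ∫ y in Ioi 0, g y * y ^ s := by
  have hdil : ∫ y in Ioi 0, g (c * y) * (c * y) ^ s = c⁻¹ * ∫ y in Ioi 0, g y * y ^ s := by
    simpa using integral_comp_mul_left_Ioi (fun y => g y * y ^ s) 0 hc
  have hpow : ∫ y in Ioi 0, g (c * y) * (c * y) ^ s = c ^ s * ∫ y in Ioi 0, g (c * y) * y ^ s := by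
    rw [← integral_const_mul]
    refine setIntegral_congr_fun measurableSet_Ioi fun y hy => ?_
    rw [Real.mul_rpow hc.le (le_of_lt hy)]
    ring
  rw [hpow] at hdil
  rw [Real.rpow_sub hc, Real.rpow_neg hc.le, Real.rpow_one, div_mul_eq_mul_div,
    eq_div_iff (Real.rpow_pos_of_pos hc s).ne', ← hdil, mul_comm]

theorem integral_Ioc_zero_rpow {r b : ℝ} (hr : -1 < r) (hb : 0 ≤ b) :
    ∫ y in Ioc 0 b, y ^ r = b ^ (r + 1) / (r + 1) := by
  rw [← intervalIntegral.integral_of_le hb, integral_rpow (Or.inl hr),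
    Real.zero_rpow (by linarith), sub_zero]

theorem setIntegral_Ioi_sub_eq_setIntegral_Ioc {μ : Measure ℝ} {φ ψ : ℝ → ℝ} {a b : ℝ}
    (hφ : IntegrableOn φ (Ioi a) μ) (hψ : IntegrableOn ψ (Ioi a) μ)
    (h : EqOn φ ψ (Ioi b)) :
    ∫ y in Ioi a, φ y ∂μ - ∫ y in Ioi a, ψ y ∂μ = ∫ y in Ioc a b, (φ y - ψ y) ∂μ := by
  rw [← integral_sub hφ hψ]
  refine setIntegral_eq_of_subset_of_forall_sdiff_eq_zero measurableSet_Ioi Ioc_subset_Ioi_self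
    fun y hy => sub_eq_zero.mpr (h (lt_of_not_ge fun hyb => hy.2 ⟨hy.1, hyb⟩))

theorem self_mul_rpow_neg_one_sub {y : ℝ} (hy : 0 < y) (α : ℝ) : y * y ^ (-1 - α) = y ^ (-α) := by
  rw [mul_comm, ← Real.rpow_add_one hy.ne']
  ring_nf

theorem integrableOn_Ioi_mul_rpow_neg_one_sub {φ : ℝ → ℝ} {α B K M : ℝ} (hα0 : 0 < α)
    (hα1 : α < 1) (hB : 0 < B) (hφ : Measurable φ) (hbdd : ∀ y, |φ y| ≤ M)
    (hlip : ∀ y ∈ Ioc 0 B, |φ y| ≤ K * y) :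
    IntegrableOn (fun y => φ y * y ^ (-1 - α)) (Ioi 0) := by
  rw [← Ioc_union_Ioi_eq_Ioi hB.le]
  refine IntegrableOn.union ?_ ?_
  · refine (((intervalIntegral.intervalIntegrable_rpow' (a := 0) (b := B)
      (r := -α) (by linarith)).1).const_mul K).mono' (by fun_prop) ?_
    filter_upwards [ae_restrict_mem measurableSet_Ioc] with y hy
    rw [Real.norm_eq_abs, abs_mul, abs_of_nonneg (Real.rpow_nonneg hy.1.le _),
      ← self_mul_rpow_neg_one_sub hy.1, ← mul_assoc]
    exact mul_le_mul_of_nonneg_right (hlip y hy) (Real.rpow_nonneg hy.1.le _)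
  · exact (integrableOn_Ioi_rpow_of_lt (by linarith) hB).bdd_mul hφ.aestronglyMeasurable
      (Eventually.of_forall hbdd)

theorem abs_setIntegral_Ioc_mul_sub_rpow_le {φ p : ℝ → ℝ} {α B K : ℝ} (hα : α < 1) (hB : 0 ≤ B)
    (hp : IntegrableOn p (Ioc 0 B)) (hp_nonneg : ∀ y ∈ Ioc 0 B, 0 ≤ p y)
    (hφ : ∀ y ∈ Ioc 0 B, |φ y| ≤ K * y) :
    |∫ y in Ioc 0 B, φ y * (p y - y ^ (-1 - α))|
      ≤ (B ^ (1 - α) / (1 - α) + ∫ y in Ioc 0 B, y * p y) * K := by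
  have hyp : IntegrableOn (fun y => y * p y) (Ioc 0 B) :=
    hp.continuousOn_mul_of_subset continuousOn_id isCompact_Icc measurableSet_Ioc
      Ioc_subset_Icc_self
  have hrpow : IntegrableOn (fun y : ℝ => y ^ (-α)) (Ioc 0 B) :=
    (intervalIntegral.intervalIntegrable_rpow' (by linarith)).1
  have hint : ∫ y in Ioc 0 B, K * (y * p y + y ^ (-α))
      = (B ^ (1 - α) / (1 - α) + ∫ y in Ioc 0 B, y * p y) * K := by
    rw [integral_const_mul, integral_add hyp hrpow, integral_Ioc_zero_rpow (by linarith) hB,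
      neg_add_eq_sub]
    ring
  rw [← hint, ← Real.norm_eq_abs]
  refine norm_integral_le_of_norm_le ((hyp.add hrpow).const_mul K) ?_
  filter_upwards [ae_restrict_mem measurableSet_Ioc] with y hy
  have hpy := hp_nonneg y hy
  have hry := Real.rpow_nonneg hy.1.le (-1 - α)
  rw [Real.norm_eq_abs, abs_mul, ← self_mul_rpow_neg_one_sub hy.1]
  calc |φ y| * |p y - y ^ (-1 - α)| ≤ K * y * (p y + y ^ (-1 - α)) :=
        mul_le_mul (hφ y hy) ((abs_sub _ _).trans_eq (by rw [abs_of_nonneg hpy, abs_of_nonneg hry]))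
          (abs_nonneg _) ((abs_nonneg _).trans (hφ y hy))
    _ = K * (y * p y + y * y ^ (-1 - α)) := by ring

theorem abs_setIntegral_Ioi_mul_sub_mul_rpow_le {φ p : ℝ → ℝ} {α B K M : ℝ} (hα0 : 0 < α)
    (hα1 : α < 1) (hB : 0 < B) (hp : IntegrableOn p (Ioi 0)) (hp_nonneg : ∀ y ∈ Ioi 0, 0 ≤ p y)
    (hp_tail : ∀ y, B < y → p y = y ^ (-1 - α)) (hφ : Measurable φ) (hbdd : ∀ y, |φ y| ≤ M)
    (hlip : ∀ y ∈ Ioc 0 B, |φ y| ≤ K * y) :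
    |(∫ y in Ioi 0, φ y * p y) - ∫ y in Ioi 0, φ y * y ^ (-1 - α)|
      ≤ (B ^ (1 - α) / (1 - α) + ∫ y in Ioc 0 B, y * p y) * K := by
  rw [setIntegral_Ioi_sub_eq_setIntegral_Ioc (b := B)
    (hp.bdd_mul hφ.aestronglyMeasurable (Eventually.of_forall hbdd))
    (integrableOn_Ioi_mul_rpow_neg_one_sub hα0 hα1 hB hφ hbdd hlip)
    (fun y hy => by simp only [hp_tail y hy])]
  simp only [← mul_sub]
  exact abs_setIntegral_Ioc_mul_sub_rpow_le hα1 hB.le (hp.mono_set Ioc_subset_Ioi_self)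
    (fun y hy => hp_nonneg y hy.1) hlip

theorem stmt_4_general
    (α B L τ x : ℝ) (hα : α ∈ Set.Ioo (0:ℝ) 1) (hB : 0 < B)
    (hτ : τ ∈ Set.Ioc (0:ℝ) 1)
    (p : ℝ → ℝ)
    (hp_nonneg : ∀ y ∈ Set.Ioi (0:ℝ), 0 ≤ p y)
    (hp_prob : ∫ y in Set.Ioi (0:ℝ), p y = 1)
    (hp_tail : ∀ y : ℝ, B ≤ y → p y = y ^ (-1 - α))
    (f : ℝ → ℝ) (hf_meas : Measurable f)
    (hf_bdd : ∃ M, ∀ y : ℝ, |f y| ≤ M)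
    (hf_lip : ∀ ε ∈ ({1, -1} : Set ℝ), ∀ y ∈ Set.Icc (0:ℝ) (B * τ ^ (1/α)),
        |f (x + ε * y) - f x| ≤ L * y) :
    ∀ ε ∈ ({1, -1} : Set ℝ),
      |τ⁻¹ * (∫ y in Set.Ioi (0:ℝ), (f (x + ε * (τ ^ (1/α) * y)) - f x) * p y)
          - ∫ y in Set.Ioi (0:ℝ), (f (x + ε * y) - f x) * y ^ (-1 - α)|
        ≤ (B ^ (1 - α) / (1 - α) + ∫ y in Set.Ioc (0:ℝ) B, y * p y) * L * τ ^ (1/α - 1) := by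
  obtain ⟨hα0, hα1⟩ := hα
  obtain ⟨M, hM⟩ := hf_bdd
  intro ε hε
  set h := τ ^ (1/α) with h_def
  have hh : 0 < h := Real.rpow_pos_of_pos hτ.1 _
  have hhα : h ^ α = τ := by
    rw [h_def, one_div, Real.rpow_inv_rpow hτ.1.le hα0.ne']
  have hlip (y : ℝ) (hy : y ∈ Ioc 0 B) : |f (x + ε * (h * y)) - f x| ≤ L * h * y := by
    rw [mul_assoc]
    refine hf_lip ε hε (h * y) ⟨mul_nonneg hh.le hy.1.le, ?_⟩
    rw [mul_comm B]
    exact mul_le_mul_of_nonneg_left hy.2 hh.le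
  have hestimate := abs_setIntegral_Ioi_mul_sub_mul_rpow_le hα0 hα1 hB
    (integrable_of_integral_eq_one hp_prob) hp_nonneg (fun y hy => hp_tail y hy.le)
    (by fun_prop) (fun y => (abs_sub _ _).trans (add_le_add (hM _) (hM x))) hlip
  have hscale : ∫ y in Ioi 0, (f (x + ε * y) - f x) * y ^ (-1 - α)
      = τ⁻¹ * ∫ y in Ioi 0, (f (x + ε * (h * y)) - f x) * y ^ (-1 - α) := by
    rw [integral_Ioi_comp_mul_left_mul_rpow (fun y => f (x + ε * y) - f x) hh,
      show -1 - (-1 - α) = α by ring, hhα, inv_mul_cancel_left₀ hτ.1.ne']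
  rw [hscale, ← mul_sub, abs_mul, abs_of_pos (inv_pos.mpr hτ.1)]
  calc τ⁻¹ * |_| ≤ τ⁻¹ * ((B ^ (1 - α) / (1 - α) + ∫ y in Ioc 0 B, y * p y) * (L * h)) :=
        mul_le_mul_of_nonneg_left hestimate (inv_nonneg.mpr hτ.1.le)
    _ = _ := by
        rw [Real.rpow_sub hτ.1, Real.rpow_one]
        ring

/-- Scaled form (5.10) of the rate estimate: with `τ = h^α`, for a bounded measurable `f`
that is Lipschitz near `x` with constant `L` (for jumps of either sign of size at most
`B τ^{1/α}`), one has
`|τ^{-1} ∫₀^∞ (f(x ± τ^{1/α} y) − f(x)) p(y) dy − ∫₀^∞ (f(x ± y) − f(x)) y^{-1-α} dy|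
   ≤ C_B L τ^{1/α − 1}` with `C_B = B^{1-α}/(1-α) + ∫₀^B y p(y) dy`. -/
theorem stmt_4
    (α B L τ x : ℝ) (hα : α ∈ Set.Ioo (0:ℝ) 1) (hB : 0 < B) (hL : 0 < L)
    (hτ : τ ∈ Set.Ioc (0:ℝ) 1)
    (p : ℝ → ℝ) (hp_meas : Measurable p)
    (hp_nonneg : ∀ y ∈ Set.Ioi (0:ℝ), 0 ≤ p y)
    (hp_prob : ∫ y in Set.Ioi (0:ℝ), p y = 1)
    (hp_tail : ∀ y : ℝ, B ≤ y → p y = y ^ (-1 - α))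
    (f : ℝ → ℝ) (hf_meas : Measurable f)
    (hf_bdd : ∃ M, ∀ y : ℝ, |f y| ≤ M)
    (hf_lip : ∀ ε ∈ ({1, -1} : Set ℝ), ∀ y ∈ Set.Icc (0:ℝ) (B * τ ^ (1/α)),
        |f (x + ε * y) - f x| ≤ L * y) :
    ∀ ε ∈ ({1, -1} : Set ℝ),
      |τ⁻¹ * (∫ y in Set.Ioi (0:ℝ), (f (x + ε * (τ ^ (1/α) * y)) - f x) * p y)
          - ∫ y in Set.Ioi (0:ℝ), (f (x + ε * y) - f x) * y ^ (-1 - α)|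
        ≤ (B ^ (1 - α) / (1 - α) + ∫ y in Set.Ioc (0:ℝ) B, y * p y) * L * τ ^ (1/α - 1) :=
  stmt_4_general α B L τ x hα hB hτ p hp_nonneg hp_prob hp_tail f hf_meas hf_bdd hf_lip
end
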